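/- For every real a with -1 < a ≤ 1, the function μ_a(r) = 4r·∑_{k=1}^∞ k²π²·(1 - a·(-1)^k)/(k²π² - r²)² is a strictly increasing bijection from the open interval (-π, π) onto ℝ. -/

import Mathlib

open Real

/-- `μ_a(r) = 4r ∑_{k≥1} k²π² (1 - a(-1)^k) / (k²π² - r²)²`. -/
noncomputable def muA (a r : ℝ) : ℝ :=
  4 * r * ∑' k : ℕ,
    ((k + 1 : ℝ) ^ 2 * π ^ 2 * (1 - a * (-1 : ℝ) ^ (k + 1))) /
      (((k + 1 : ℝ) ^ 2 * π ^ 2 - r ^ 2) ^ 2)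

open Filter Topology

/-- The `k`-th summand in `μ_a`. -/
noncomputable def termA (a : ℝ) (k : ℕ) (r : ℝ) : ℝ :=
  ((k + 1 : ℝ) ^ 2 * π ^ 2 * (1 - a * (-1 : ℝ) ^ (k + 1))) /
      (((k + 1 : ℝ) ^ 2 * π ^ 2 - r ^ 2) ^ 2)

lemma muA_eq_tsum (a r : ℝ) : muA a r = 4 * r * ∑' k, termA a k r := rfl

lemma one_le_ksq (k : ℕ) : (1 : ℝ) ≤ ((k : ℝ) + 1) ^ 2 := by
  have h : (1 : ℝ) ≤ (k : ℝ) + 1 := by have := Nat.cast_nonneg (α := ℝ) k; linarith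
  nlinarith

lemma den_pos {r : ℝ} (hr : r ^ 2 < π ^ 2) (k : ℕ) :
    0 < ((k : ℝ) + 1) ^ 2 * π ^ 2 - r ^ 2 := by
  nlinarith [one_le_ksq k, sq_nonneg π]

lemma num_bounds {a : ℝ} (ha : -1 < a) (ha' : a ≤ 1) (k : ℕ) :
    0 ≤ 1 - a * (-1 : ℝ) ^ (k + 1) ∧ 1 - a * (-1 : ℝ) ^ (k + 1) ≤ 2 := by
  rcases Nat.even_or_odd (k + 1) with h | h
  · rw [h.neg_one_pow]; constructor <;> linarith
  · rw [h.neg_one_pow]; constructor <;> linarith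

lemma termA_nonneg {a : ℝ} (ha : -1 < a) (ha' : a ≤ 1) (k : ℕ) (r : ℝ) :
    0 ≤ termA a k r := by
  apply div_nonneg _ (sq_nonneg _)
  exact mul_nonneg (by positivity) (num_bounds ha ha' k).1

lemma termA_le {a : ℝ} (ha : -1 < a) (ha' : a ≤ 1) {x s2 : ℝ} (hx : x ^ 2 ≤ s2)
    (hs : s2 < π ^ 2) (k : ℕ) :
    termA a k x ≤ 2 * π ^ 2 / (π ^ 2 - s2) ^ 2 * (1 / ((k : ℝ) + 1) ^ 2) := by
  have hk := one_le_ksq k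
  have hs2 : (0:ℝ) ≤ s2 := le_trans (sq_nonneg x) hx
  have hden : ((k : ℝ) + 1) ^ 2 * (π ^ 2 - s2) ≤ ((k : ℝ) + 1) ^ 2 * π ^ 2 - x ^ 2 := by
    nlinarith [sq_nonneg x, mul_le_mul_of_nonneg_left hx (sq_nonneg ((k : ℝ) + 1))]
  have hdpos : 0 < ((k : ℝ) + 1) ^ 2 * (π ^ 2 - s2) := by
    have : 0 < π ^ 2 - s2 := by linarith
    positivity
  have h1 : termA a k x ≤ (((k : ℝ) + 1) ^ 2 * π ^ 2 * 2) /
      (((k : ℝ) + 1) ^ 2 * (π ^ 2 - s2)) ^ 2 := by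
    apply div_le_div₀ (by positivity)
    · exact mul_le_mul_of_nonneg_left (num_bounds ha ha' k).2 (by positivity)
    · positivity
    · exact pow_le_pow_left₀ hdpos.le hden 2
  refine h1.trans (le_of_eq ?_)
  have hne : ((k : ℝ) + 1) ≠ 0 := by positivity
  have hne2 : π ^ 2 - s2 ≠ 0 := by intro h; rw [sub_eq_zero] at h; linarith
  field_simp

lemma summable_aux : Summable (fun k : ℕ => (1 : ℝ) / ((k : ℝ) + 1) ^ 2) := by
  have h0 : Summable (fun n : ℕ => (1 : ℝ) / (n : ℝ) ^ 2) :=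
    Real.summable_one_div_nat_pow.mpr (by norm_num)
  have h := (summable_nat_add_iff 1).mpr h0
  refine h.congr fun k => ?_
  push_cast
  ring

lemma summable_termA {a r : ℝ} (ha : -1 < a) (ha' : a ≤ 1) (hr : r ^ 2 < π ^ 2) :
    Summable (fun k => termA a k r) :=
  Summable.of_nonneg_of_le (fun k => termA_nonneg ha ha' k r)
    (fun k => termA_le ha ha' le_rfl hr k) (summable_aux.mul_left _)

lemma key_mono {m r1 r2 : ℝ} (h1 : r1 ^ 2 < m) (h2 : r2 ^ 2 < m) (h12 : r1 < r2) :
    r1 / (m - r1 ^ 2) ^ 2 < r2 / (m - r2 ^ 2) ^ 2 := by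
  have hm1 : 0 < m - r1 ^ 2 := sub_pos.2 h1
  have hm2 : 0 < m - r2 ^ 2 := sub_pos.2 h2
  rw [div_lt_div_iff₀ (by positivity) (by positivity)]
  nlinarith [sq_nonneg (m + r1 * r2), sq_nonneg (r1 + r2), sq_nonneg (r1 - r2),
    mul_pos hm1 hm2, sq_nonneg (m - r1 * r2), sub_pos.2 h12,
    mul_nonneg (sub_pos.2 h12).le (sq_nonneg (m + r1 * r2)),
    mul_nonneg (sub_pos.2 h12).le (sq_nonneg (r1 + r2))]

lemma pi_sq_le_mk (k : ℕ) : π ^ 2 ≤ ((k : ℝ) + 1) ^ 2 * π ^ 2 := by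
  nlinarith [one_le_ksq k, sq_nonneg π]

lemma g_eq (a : ℝ) (k : ℕ) (r : ℝ) :
    4 * r * termA a k r = 4 * (((k : ℝ) + 1) ^ 2 * π ^ 2 * (1 - a * (-1 : ℝ) ^ (k + 1))) *
      (r / (((k : ℝ) + 1) ^ 2 * π ^ 2 - r ^ 2) ^ 2) := by
  unfold termA; ring

lemma g_mono {a : ℝ} (ha : -1 < a) (ha' : a ≤ 1) {r1 r2 : ℝ}
    (h1 : r1 ^ 2 < π ^ 2) (h2 : r2 ^ 2 < π ^ 2) (h12 : r1 < r2) (k : ℕ) :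
    4 * r1 * termA a k r1 ≤ 4 * r2 * termA a k r2 := by
  have hkey := key_mono (lt_of_lt_of_le h1 (pi_sq_le_mk k))
    (lt_of_lt_of_le h2 (pi_sq_le_mk k)) h12
  rw [g_eq, g_eq]
  exact mul_le_mul_of_nonneg_left hkey.le
    (mul_nonneg (by norm_num) (mul_nonneg (by positivity) (num_bounds ha ha' k).1))

lemma g_strict {a : ℝ} (ha : -1 < a) (ha' : a ≤ 1) {r1 r2 : ℝ}
    (h1 : r1 ^ 2 < π ^ 2) (h2 : r2 ^ 2 < π ^ 2) (h12 : r1 < r2) :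
    4 * r1 * termA a 0 r1 < 4 * r2 * termA a 0 r2 := by
  have hkey := key_mono (lt_of_lt_of_le h1 (pi_sq_le_mk 0))
    (lt_of_lt_of_le h2 (pi_sq_le_mk 0)) h12
  rw [g_eq, g_eq]
  apply mul_lt_mul_of_pos_left hkey
  have hpi := Real.pi_pos
  have h1a : (0:ℝ) < 1 + a := by linarith
  have : (1 - a * (-1 : ℝ) ^ (0 + 1)) = 1 + a := by norm_num
  rw [this]
  positivity

lemma mem_sq {r : ℝ} (hr : r ∈ Set.Ioo (-π) π) : r ^ 2 < π ^ 2 :=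
  sq_lt_sq' hr.1 hr.2

lemma muA_smono (a : ℝ) (ha : -1 < a) (ha' : a ≤ 1) :
    StrictMonoOn (muA a) (Set.Ioo (-π) π) := by
  intro r1 hr1 r2 hr2 h12
  have h1 := mem_sq hr1
  have h2 := mem_sq hr2
  rw [muA_eq_tsum, muA_eq_tsum, ← tsum_mul_left, ← tsum_mul_left]
  exact Summable.tsum_lt_tsum (f := fun k => 4 * r1 * termA a k r1)
    (g := fun k => 4 * r2 * termA a k r2)
    (fun k => g_mono ha ha' h1 h2 h12 k) (g_strict ha ha' h1 h2 h12)
    ((summable_termA ha ha' h1).mul_left _) ((summable_termA ha ha' h2).mul_left _)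

lemma muA_contOn (a : ℝ) (ha : -1 < a) (ha' : a ≤ 1) :
    ContinuousOn (muA a) (Set.Ioo (-π) π) := by
  have hT : ContinuousOn (fun r => ∑' k, termA a k r) (Set.Ioo (-π) π) := by
    intro r0 hr0
    have hpi := Real.pi_pos
    have h0 : |r0| < π := abs_lt.2 ⟨hr0.1, hr0.2⟩
    set s : ℝ := (|r0| + π) / 2 with hsdef
    have hs1 : |r0| < s := by rw [hsdef]; linarith
    have hs2 : s < π := by rw [hsdef]; linarith
    have hs0 : 0 ≤ s := (abs_nonneg r0).trans hs1.le
    have hssq : s ^ 2 < π ^ 2 := by nlinarith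
    have hC : ContinuousOn (fun r => ∑' k, termA a k r) (Set.Ioo (-s) s) := by
      apply continuousOn_tsum
        (u := fun k : ℕ => 2 * π ^ 2 / (π ^ 2 - s ^ 2) ^ 2 * (1 / ((k : ℝ) + 1) ^ 2))
      · intro k
        apply ContinuousOn.div continuousOn_const (by fun_prop)
        intro x hx
        have hx2 : x ^ 2 < π ^ 2 := by
          have : x ^ 2 ≤ s ^ 2 := sq_le_sq' hx.1.le hx.2.le
          linarith
        exact pow_ne_zero 2 (ne_of_gt (den_pos hx2 k))
      · exact summable_aux.mul_left _
      · intro k x hx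
        rw [Real.norm_eq_abs, abs_of_nonneg (termA_nonneg ha ha' k x)]
        exact termA_le ha ha' (sq_le_sq' hx.1.le hx.2.le) hssq k
    have hmem : r0 ∈ Set.Ioo (-s) s := by
      have := abs_lt.1 hs1
      exact ⟨this.1, this.2⟩
    exact (hC.continuousAt (isOpen_Ioo.mem_nhds hmem)).continuousWithinAt
  have : muA a = fun r => 4 * r * ∑' k, termA a k r := rfl
  rw [this]
  exact ((continuous_const.mul continuous_id).continuousOn).mul hT

lemma termA_zero (a r : ℝ) :
    termA a 0 r = π ^ 2 * (1 + a) * ((π ^ 2 - r ^ 2) ^ 2)⁻¹ := by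
  norm_num [termA, div_eq_mul_inv]

lemma muA_tendsto (a : ℝ) (ha : -1 < a) (ha' : a ≤ 1) :
    Tendsto (muA a) (𝓝[<] π) atTop := by
  have hpi := Real.pi_pos
  have h1a : (0:ℝ) < 1 + a := by linarith
  have hev : Set.Ioo 0 π ∈ 𝓝[<] π := Ioo_mem_nhdsLT hpi
  have hA : Tendsto (fun r : ℝ => 4 * r * (π ^ 2 * (1 + a))) (𝓝[<] π)
      (𝓝 (4 * π * (π ^ 2 * (1 + a)))) :=
    ((continuous_const.mul continuous_id).mul continuous_const).tendsto π |>.mono_left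
      nhdsWithin_le_nhds
  have hApos : 0 < 4 * π * (π ^ 2 * (1 + a)) := by positivity
  have hB0 : Tendsto (fun r : ℝ => (π ^ 2 - r ^ 2) ^ 2) (𝓝[<] π) (𝓝[>] 0) := by
    apply tendsto_nhdsWithin_of_tendsto_nhds_of_eventually_within
    · have hc : Tendsto (fun r : ℝ => (π ^ 2 - r ^ 2) ^ 2) (𝓝 π)
          (𝓝 ((π ^ 2 - π ^ 2) ^ 2)) := by
        exact ((continuous_const.sub (continuous_pow 2)).pow 2).tendsto π
      simpa using hc.mono_left nhdsWithin_le_nhds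
    · filter_upwards [hev] with r hr
      have hr2 : r ^ 2 < π ^ 2 := sq_lt_sq' (by linarith [hr.1]) hr.2
      have : 0 < π ^ 2 - r ^ 2 := by linarith
      exact pow_pos this 2
  have hB : Tendsto (fun r : ℝ => ((π ^ 2 - r ^ 2) ^ 2)⁻¹) (𝓝[<] π) atTop :=
    hB0.inv_tendsto_nhdsGT_zero
  have hlim : Tendsto (fun r : ℝ => 4 * r * (π ^ 2 * (1 + a)) * ((π ^ 2 - r ^ 2) ^ 2)⁻¹)
      (𝓝[<] π) atTop := hA.pos_mul_atTop hApos hB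
  apply tendsto_atTop_mono' _ _ hlim
  filter_upwards [hev] with r hr
  have hr2 : r ^ 2 < π ^ 2 := sq_lt_sq' (by linarith [hr.1]) hr.2
  have hle : termA a 0 r ≤ ∑' k, termA a k r :=
    Summable.le_tsum (summable_termA ha ha' hr2) 0 (fun j _ => termA_nonneg ha ha' j r)
  have h4r : (0:ℝ) ≤ 4 * r := by linarith [hr.1]
  calc 4 * r * (π ^ 2 * (1 + a)) * ((π ^ 2 - r ^ 2) ^ 2)⁻¹
      = 4 * r * termA a 0 r := by rw [termA_zero]; ring
    _ ≤ 4 * r * ∑' k, termA a k r := mul_le_mul_of_nonneg_left hle h4r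
    _ = muA a r := (muA_eq_tsum a r).symm

lemma muA_neg (a r : ℝ) : muA a (-r) = -muA a r := by
  simp only [muA, neg_sq]
  ring

/-- For `-1 < a ≤ 1`, `μ_a` is a strictly increasing bijection from `(-π, π)` onto `ℝ`. -/
theorem muA_strictMono_bijOn (a : ℝ) (ha : -1 < a) (ha' : a ≤ 1) :
    StrictMonoOn (muA a) (Set.Ioo (-π) π) ∧
      Set.BijOn (muA a) (Set.Ioo (-π) π) Set.univ := by
  have hsm := muA_smono a ha ha'
  refine ⟨hsm, Set.mapsTo_univ _ _, hsm.injOn, ?_⟩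
  intro y _
  have hev : Set.Ioo 0 π ∈ 𝓝[<] π := Ioo_mem_nhdsLT Real.pi_pos
  obtain ⟨r, hry, hr⟩ := (((muA_tendsto a ha ha').eventually_gt_atTop |y|).and
    (eventually_of_mem hev fun x hx => hx)).exists
  have hsub : Set.Icc (-r) r ⊆ Set.Ioo (-π) π := fun x hx =>
    ⟨lt_of_lt_of_le (neg_lt_neg hr.2) hx.1, lt_of_le_of_lt hx.2 hr.2⟩
  have hIcc : y ∈ Set.Icc (muA a (-r)) (muA a r) := by
    rw [muA_neg]
    exact ⟨by linarith [neg_abs_le y], by linarith [le_abs_self y]⟩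
  obtain ⟨x, hx, hxy⟩ := intermediate_value_Icc (by linarith [hr.1] : -r ≤ r)
    ((muA_contOn a ha ha').mono hsub) hIcc
  exact ⟨x, hsub hx, hxy⟩
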